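/- arXiv:1701.02044 — 7 statements merged into one kernel-verified Lean document; each statement's English description precedes it below -/
import Mathlib

section
/- For every real γ > 0, (1/(4γ⁴)) · ∫₀^∞ ∫₀^{x₂} (exp(−x₁) + exp(−x₂)) · x₁ · x₂ · exp(−x₂²/(4γ²)) dx₁ dx₂ = 2 + γ² − γ·(5 + 2γ²)·W(γ). -/
open MeasureTheory Real

/-- `W x = exp (x²) · ∫_x^∞ exp (−t²) dt`, i.e. `(√π/2)·erfcx x`. -/
noncomputable def W (x : ℝ) : ℝ := Real.exp (x ^ 2) * ∫ t in Set.Ioi x, Real.exp (-(t ^ 2))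

/-! The inner integral is elementary:
`∫₀^s (e^{-x} + e^{-s}) x dx = 1 - e^{-s}(1 + s) + e^{-s} s²/2`. Multiplied by `s e^{-s²/(4γ²)}`
it has an explicit antiderivative: since `-s - s²/(4γ²) = γ² - ((s + 2γ²)/(2γ))²`, the terms
carrying `e^{-s}` integrate to a polynomial times `e^{-s} e^{-s²/(4γ²)}` plus a multiple of the
Gaussian tail at `(s + 2γ²)/(2γ)`, which at `s = 0` is `e^{-γ²} W γ`. The integrand is nonnegative
and the antiderivative vanishes at infinity, so the improper integral is minus its value at `0`. -/

open Set Filter Topology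

noncomputable def gaussianTail (u : ℝ) : ℝ := ∫ t in Ioi u, exp (-t ^ 2)

theorem integrable_exp_neg_sq : Integrable fun t : ℝ => exp (-t ^ 2) := by
  simpa using integrable_exp_neg_mul_sq one_pos

theorem hasDerivAt_gaussianTail (u : ℝ) : HasDerivAt gaussianTail (-exp (-u ^ 2)) u := by
  have hcont : Continuous fun t : ℝ => exp (-t ^ 2) := by fun_prop
  have h : gaussianTail = fun v => gaussianTail 0 - ∫ t in 0..v, exp (-t ^ 2) :=
    funext fun v => eq_sub_of_add_eq' (intervalIntegral.integral_interval_add_Ioi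
      integrable_exp_neg_sq.integrableOn integrable_exp_neg_sq.integrableOn)
  rw [h]
  exact (hcont.integral_hasStrictDerivAt 0 u).hasDerivAt.const_sub _

theorem tendsto_gaussianTail_atTop : Tendsto gaussianTail atTop (𝓝 0) :=
  tendsto_integral_Ioi_zero tendsto_id

theorem integral_exp_neg_add_const_mul_id (c s : ℝ) :
    ∫ x in 0..s, (exp (-x) + c) * x = 1 - exp (-s) * (1 + s) + c * s ^ 2 / 2 := by
  have hderiv : ∀ x ∈ uIcc 0 s,
      HasDerivAt (fun y => -(exp (-y) * (1 + y)) + c * y ^ 2 / 2) ((exp (-x) + c) * x) x := by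
    intro x _
    refine (((hasDerivAt_neg x).exp.mul ((hasDerivAt_id x).const_add 1)).neg.add
      (((hasDerivAt_pow 2 x).const_mul c).div_const 2)).congr_deriv ?_
    simp only [id, Nat.cast_ofNat]
    ring
  rw [intervalIntegral.integral_eq_sub_of_hasDerivAt hderiv
    (Continuous.intervalIntegrable (by fun_prop) _ _)]
  simp only [neg_zero, exp_zero, zero_pow two_ne_zero, zero_div, mul_zero, add_zero, mul_one]
  ring

theorem tendsto_quadratic_mul_exp_neg_atTop (a b c : ℝ) :
    Tendsto (fun s => (a * s ^ 2 + b * s + c) * exp (-s)) atTop (𝓝 0) := by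
  have h := (((tendsto_pow_mul_exp_neg_atTop_nhds_zero 2).const_mul a).add
    ((tendsto_pow_mul_exp_neg_atTop_nhds_zero 1).const_mul b)).add
    ((tendsto_pow_mul_exp_neg_atTop_nhds_zero 0).const_mul c)
  simp only [mul_zero, add_zero] at h
  exact h.congr fun s => by ring

theorem exp_neg_sq_shift {γ : ℝ} (hγ : γ ≠ 0) (s : ℝ) :
    exp (-((s + 2 * γ ^ 2) / (2 * γ)) ^ 2) =
      exp (-s) * exp (-s ^ 2 / (4 * γ ^ 2)) / exp (γ ^ 2) := by
  rw [← exp_add, ← exp_sub]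
  congr 1
  field_simp
  ring

theorem tendsto_exp_neg_sq_div_atTop {a : ℝ} (ha : 0 < a) :
    Tendsto (fun s => exp (-s ^ 2 / a)) atTop (𝓝 0) :=
  tendsto_exp_atBot.comp <|
    (tendsto_neg_atTop_atBot.comp (tendsto_pow_atTop two_ne_zero)).atBot_div_const ha

noncomputable def marginalAntideriv (γ s : ℝ) : ℝ :=
  γ ^ 2 * (-2 * exp (-s ^ 2 / (4 * γ ^ 2))
    + (-s ^ 2 + 2 * (1 + γ ^ 2) * s + (2 - 8 * γ ^ 2 - 4 * γ ^ 4)) * exp (-s)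
      * exp (-s ^ 2 / (4 * γ ^ 2))
    + 4 * γ ^ 3 * (5 + 2 * γ ^ 2) * exp (γ ^ 2) * gaussianTail ((s + 2 * γ ^ 2) / (2 * γ)))

theorem hasDerivAt_marginalAntideriv {γ : ℝ} (hγ : γ ≠ 0) (s : ℝ) :
    HasDerivAt (marginalAntideriv γ)
      ((1 - exp (-s) * (1 + s) + exp (-s) * s ^ 2 / 2) * (s * exp (-s ^ 2 / (4 * γ ^ 2)))) s := by
  have hX : HasDerivAt (fun y => exp (-y ^ 2 / (4 * γ ^ 2)))
      (exp (-s ^ 2 / (4 * γ ^ 2)) * (-(2 * s) / (4 * γ ^ 2))) s := by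
    simpa using (((hasDerivAt_pow 2 s).neg).div_const (4 * γ ^ 2)).exp
  have hP : HasDerivAt (fun y => -y ^ 2 + 2 * (1 + γ ^ 2) * y + (2 - 8 * γ ^ 2 - 4 * γ ^ 4))
      (-(2 * s) + 2 * (1 + γ ^ 2)) s := by
    simpa using (((hasDerivAt_pow 2 s).neg).add
      ((hasDerivAt_id s).const_mul (2 * (1 + γ ^ 2)))).add_const (2 - 8 * γ ^ 2 - 4 * γ ^ 4)
  have hT : HasDerivAt (fun y => gaussianTail ((y + 2 * γ ^ 2) / (2 * γ)))
      (-exp (-((s + 2 * γ ^ 2) / (2 * γ)) ^ 2) * (1 / (2 * γ))) s :=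
    (hasDerivAt_gaussianTail _).comp s (((hasDerivAt_id s).add_const _).div_const _)
  refine ((((hX.const_mul (-2)).add ((hP.mul (hasDerivAt_neg s).exp).mul hX)).add
    (hT.const_mul (4 * γ ^ 3 * (5 + 2 * γ ^ 2) * exp (γ ^ 2)))).const_mul (γ ^ 2)).congr_deriv ?_
  rw [Pi.mul_apply, exp_neg_sq_shift hγ]
  field_simp
  ring

theorem tendsto_marginalAntideriv_atTop {γ : ℝ} (hγ : 0 < γ) :
    Tendsto (marginalAntideriv γ) atTop (𝓝 0) := by
  have hX := tendsto_exp_neg_sq_div_atTop (a := 4 * γ ^ 2) (by positivity)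
  have hT : Tendsto (fun s => gaussianTail ((s + 2 * γ ^ 2) / (2 * γ))) atTop (𝓝 0) :=
    tendsto_gaussianTail_atTop.comp
      ((tendsto_atTop_add_const_right _ _ tendsto_id).atTop_div_const (by positivity))
  have h := (((hX.const_mul (-2)).add
    ((tendsto_quadratic_mul_exp_neg_atTop (-1) (2 * (1 + γ ^ 2)) (2 - 8 * γ ^ 2 - 4 * γ ^ 4)).mul
      hX)).add (hT.const_mul (4 * γ ^ 3 * (5 + 2 * γ ^ 2) * exp (γ ^ 2)))).const_mul (γ ^ 2)
  simp only [mul_zero, add_zero] at h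
  exact h.congr fun s => by simp only [marginalAntideriv]; ring

theorem marginalAntideriv_zero {γ : ℝ} (hγ : γ ≠ 0) :
    marginalAntideriv γ 0 = -(4 * γ ^ 4) * (2 + γ ^ 2 - γ * (5 + 2 * γ ^ 2) * W γ) := by
  have hu : (0 + 2 * γ ^ 2) / (2 * γ) = γ := by field_simp; ring
  simp only [marginalAntideriv, hu, W, gaussianTail]
  simp only [neg_zero, exp_zero, zero_pow two_ne_zero, zero_div, mul_zero, add_zero, mul_one]
  ring

theorem marginal_terms_second_order (γ : ℝ) (hγ : 0 < γ) :
    (1 / (4 * γ ^ 4)) *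
      ∫ x₂ in Set.Ioi (0 : ℝ),
        ∫ x₁ in (0 : ℝ)..x₂,
          (Real.exp (-x₁) + Real.exp (-x₂)) * x₁ * x₂ * Real.exp (-(x₂ ^ 2) / (4 * γ ^ 2))
      = 2 + γ ^ 2 - γ * (5 + 2 * γ ^ 2) * W γ := by
  have hderiv : ∀ s, HasDerivAt (marginalAntideriv γ)
      (∫ x in 0..s, (exp (-x) + exp (-s)) * x * s * exp (-s ^ 2 / (4 * γ ^ 2))) s := by
    intro s
    simp_rw [mul_assoc _ s, intervalIntegral.integral_mul_const,
      integral_exp_neg_add_const_mul_id]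
    exact hasDerivAt_marginalAntideriv hγ.ne' s
  have hnonneg : ∀ s ∈ Ioi (0 : ℝ),
      0 ≤ ∫ x in 0..s, (exp (-x) + exp (-s)) * x * s * exp (-s ^ 2 / (4 * γ ^ 2)) :=
    fun s hs => intervalIntegral.integral_nonneg (le_of_lt hs) fun x ⟨hx, _⟩ => by
      have : 0 < s := hs
      positivity
  rw [integral_Ioi_of_hasDerivAt_of_nonneg' (fun s _ => hderiv s) hnonneg
    (tendsto_marginalAntideriv_atTop hγ), marginalAntideriv_zero hγ.ne']
  field_simp
  ring
end

section
/- Define J : ℕ × ℝ → ℝ recursively by J(0, y) = 1 and J(i+1, y) = ∫₀^y t·(1 − exp(−t))·J(i, t) dt. Then for every natural number i and every real y ≥ 0, J(i, y) = (1/(2^i · i!)) · ( y² − 2 + 2·(y + 1)·exp(−y) )^i. -/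
open MeasureTheory Real

/-- The iterated ordered integral `J 0 y = 1`,
`J (i+1) y = ∫₀^y t·(1 − e^{−t})·J i t dt` from Appendix F of the paper. -/
noncomputable def J : ℕ → ℝ → ℝ
  | 0 => fun _ => 1
  | i + 1 => fun y => ∫ t in (0 : ℝ)..y, t * (1 - Real.exp (-t)) * J i t

/-!
If `Φ` is an antiderivative of the kernel `f` with `Φ 0 = 0`, then `Φ ^ (i + 1) / (i + 1)!` is an
antiderivative of `f · Φ ^ i / i!`, so by induction the `i`-fold ordered integral of `f` is
`Φ ^ i / i!`.
-/

theorem HasDerivAt.pow_succ_div_factorial {Φ : ℝ → ℝ} {d t : ℝ} (hΦ : HasDerivAt Φ d t) (i : ℕ) :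
    HasDerivAt (fun t => Φ t ^ (i + 1) / (i + 1).factorial) (d * (Φ t ^ i / i.factorial)) t := by
  refine ((hΦ.pow (i + 1)).div_const _).congr_deriv ?_
  push_cast [Nat.factorial_succ]
  field_simp

theorem integral_mul_pow_div_factorial {f Φ : ℝ → ℝ} (hf : Continuous f)
    (hΦ : ∀ t, HasDerivAt Φ (f t) t) (i : ℕ) (a b : ℝ) :
    ∫ t in a..b, f t * (Φ t ^ i / i.factorial) =
      Φ b ^ (i + 1) / (i + 1).factorial - Φ a ^ (i + 1) / (i + 1).factorial := by
  have hΦc : Continuous Φ := continuous_iff_continuousAt.2 fun t => (hΦ t).continuousAt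
  refine intervalIntegral.integral_eq_sub_of_hasDerivAt
    (fun t _ => (hΦ t).pow_succ_div_factorial i) ?_
  exact (hf.mul ((hΦc.pow i).div_const _)).intervalIntegrable a b

noncomputable def kernelPrimitive (t : ℝ) : ℝ := t ^ 2 / 2 - 1 + (t + 1) * exp (-t)

theorem kernelPrimitive_zero : kernelPrimitive 0 = 0 := by
  simp [kernelPrimitive]

theorem hasDerivAt_kernelPrimitive (t : ℝ) :
    HasDerivAt kernelPrimitive (t * (1 - exp (-t))) t := by
  have hexp : HasDerivAt (fun t => exp (-t)) (-exp (-t)) t := by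
    simpa using (hasDerivAt_neg t).exp
  have h := (((hasDerivAt_pow 2 t).div_const 2).sub_const 1).add
    (((hasDerivAt_id t).add_const 1).mul hexp)
  refine h.congr_deriv ?_
  simp only [id]
  ring

theorem J_eq_kernelPrimitive_pow_div_factorial (i : ℕ) (y : ℝ) :
    J i y = kernelPrimitive y ^ i / i.factorial := by
  induction i generalizing y with
  | zero => simp [J]
  | succ i ih =>
    have hf : Continuous fun t : ℝ => t * (1 - exp (-t)) := by fun_prop
    simp only [J, ih]
    rw [integral_mul_pow_div_factorial hf hasDerivAt_kernelPrimitive, kernelPrimitive_zero]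
    simp

theorem J_closed_form_general (i : ℕ) (y : ℝ) :
    J i y = (1 / (2 ^ i * (Nat.factorial i : ℝ))) *
      (y ^ 2 - 2 + 2 * (y + 1) * Real.exp (-y)) ^ i := by
  have hΦ : y ^ 2 - 2 + 2 * (y + 1) * exp (-y) = 2 * kernelPrimitive y := by
    rw [kernelPrimitive]; ring
  rw [J_eq_kernelPrimitive_pow_div_factorial, hΦ, mul_pow]
  field_simp

theorem J_closed_form (i : ℕ) (y : ℝ) (hy : 0 ≤ y) :
    J i y = (1 / (2 ^ i * (Nat.factorial i : ℝ))) *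
      (y ^ 2 - 2 + 2 * (y + 1) * Real.exp (-y)) ^ i :=
  J_closed_form_general i y
end

section
/- For every real γ > 0, 2 + γ² − γ(5 + 2γ²)W(γ) − (1/(4γ⁴π)) ∫₀^π ∫₀^∞ ∫₀^{x₂} x₁·x₂·exp(−x₁·φ/π − x₂ − x₂²/(4γ²)) dx₁ dx₂ dφ = (1/γ)·[ 3γ + γ³ − W(γ)·(2γ⁴ + 7γ² + 2) + 2·W(2γ) ]. -/
open MeasureTheory Real

/-!
The φ- and x₁-integrals are elementary,
`∫₀^π ∫₀^y x₁ e^{-x₁φ/π} dx₁ dφ = π (y - 1 + e^{-y})`, so the triple integral equals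
`π ∫₀^∞ x (x - 1 + e^{-x}) e^{-x - x²/(4γ²)} dx`. The integrand is nonnegative, so the
finiteness of this last integral is what justifies Fubini. It has an explicit primitive in
terms of `e^{-sx - x²/(4γ²)}` (`s = 1, 2`) and, after completing the square, the Gaussian
tails `∫_{x/(2γ) + sγ}^∞ e^{-t²} dt`; at `x = 0` these produce `W γ` and `W (2γ)`.
-/

open Set Filter Topology

theorem hasDerivAt_integral_Ioi {E : Type*} [NormedAddCommGroup E] [NormedSpace ℝ E]
    [CompleteSpace E] {f : ℝ → E} (hf : Continuous f) (hfi : Integrable f) (x : ℝ) :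
    HasDerivAt (fun u ↦ ∫ t in Ioi u, f t) (-f x) x := by
  have tail (u : ℝ) : ∫ t in Ioi u, f t = (∫ t in Ioi 0, f t) - ∫ t in 0..u, f t := by
    rw [eq_sub_iff_add_eq', intervalIntegral.integral_interval_add_Ioi hfi.integrableOn
      hfi.integrableOn]
  rw [funext tail]
  exact (hf.integral_hasStrictDerivAt 0 x).hasDerivAt.const_sub _

noncomputable def expQuad (γ s x : ℝ) : ℝ := exp (-(s * x) - x ^ 2 / (4 * γ ^ 2))

-- Completing the square: for `γ > 0`, `expQuadTail γ s x = ∫ t in Ioi x, expQuad γ s t`.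
noncomputable def expQuadTail (γ s x : ℝ) : ℝ :=
  2 * γ * exp ((s * γ) ^ 2) * ∫ t in Ioi (x / (2 * γ) + s * γ), exp (-t ^ 2)

section
variable {γ : ℝ} (s : ℝ)

theorem expQuadTail_zero : expQuadTail γ s 0 = 2 * γ * W (s * γ) := by
  rw [expQuadTail, W, zero_div, zero_add, mul_assoc]

theorem exp_neg_mul_expQuad (x : ℝ) : exp (-x) * expQuad γ s x = expQuad γ (s + 1) x := by
  rw [expQuad, expQuad, ← exp_add]
  ring_nf

theorem hasDerivAt_expQuad (hγ : γ ≠ 0) (x : ℝ) :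
    HasDerivAt (expQuad γ s) (-(s + x / (2 * γ ^ 2)) * expQuad γ s x) x := by
  have h : HasDerivAt (fun x ↦ -(s * x) - x ^ 2 / (4 * γ ^ 2)) (-(s + x / (2 * γ ^ 2))) x := by
    refine (((hasDerivAt_id' x).const_mul s).neg.sub
      ((hasDerivAt_pow 2 x).div_const (4 * γ ^ 2))).congr_deriv ?_
    field_simp
    ring
  exact h.exp.congr_deriv (mul_comm _ _)

theorem hasDerivAt_expQuadTail (hγ : γ ≠ 0) (x : ℝ) :
    HasDerivAt (expQuadTail γ s) (-expQuad γ s x) x := by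
  have hlin : HasDerivAt (fun x ↦ x / (2 * γ) + s * γ) (1 / (2 * γ)) x := by
    simpa using ((hasDerivAt_id x).div_const (2 * γ)).add_const (s * γ)
  have htail := (hasDerivAt_integral_Ioi (f := fun t ↦ exp (-t ^ 2)) (by fun_prop)
    (by simpa using integrable_exp_neg_mul_sq one_pos) _).comp x hlin
  refine (htail.const_mul (2 * γ * exp ((s * γ) ^ 2))).congr_deriv ?_
  have hexponent :
      -(s * x) - x ^ 2 / (4 * γ ^ 2) = (s * γ) ^ 2 + -(x / (2 * γ) + s * γ) ^ 2 := by
    field_simp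
    ring
  rw [expQuad, hexponent, exp_add]
  field_simp

theorem tendsto_expQuadTail (hγ : 0 < γ) : Tendsto (expQuadTail γ s) atTop (𝓝 0) := by
  have hlin : Tendsto (fun x ↦ x / (2 * γ) + s * γ) atTop atTop :=
    tendsto_atTop_add_const_right _ _ (tendsto_id.atTop_div_const (by positivity))
  exact (tendsto_integral_Ioi_zero (f := fun t ↦ exp (-t ^ 2)) hlin).const_mul
    (2 * γ * exp ((s * γ) ^ 2)) |>.trans (by rw [mul_zero])

theorem tendsto_pow_mul_expQuad (hs : 0 < s) (n : ℕ) :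
    Tendsto (fun x ↦ x ^ n * expQuad γ s x) atTop (𝓝 0) := by
  have hdecay :
      Tendsto (fun x ↦ (s ^ n)⁻¹ * ((s * x) ^ n * exp (-(s * x)))) atTop (𝓝 0) := by
    simpa using ((tendsto_pow_mul_exp_neg_atTop_nhds_zero n).comp
      (tendsto_id.const_mul_atTop hs)).const_mul (s ^ n)⁻¹
  refine squeeze_zero' ?_ ?_ hdecay
  · filter_upwards [eventually_ge_atTop 0] with x hx
    exact mul_nonneg (pow_nonneg hx n) (exp_pos _).le
  · filter_upwards [eventually_ge_atTop 0] with x hx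
    rw [mul_pow, mul_assoc, inv_mul_cancel_left₀ (pow_ne_zero n hs.ne')]
    gcongr
    rw [expQuad]
    gcongr
    linarith [div_nonneg (sq_nonneg x) (by positivity : (0 : ℝ) ≤ 4 * γ ^ 2)]

end

-- Integrate `x * expQuad γ s x` and `x ^ 2 * expQuad γ s x` by parts, using
-- `(expQuad γ s)' = -(s + x / (2 * γ ^ 2)) * expQuad γ s` and `(expQuadTail γ s)' = -expQuad γ s`.
noncomputable def expQuadMomentPrimitive (γ x : ℝ) : ℝ :=
  (4 * γ ^ 4 + 2 * γ ^ 2 - 2 * γ ^ 2 * x) * expQuad γ 1 x - 2 * γ ^ 2 * expQuad γ 2 x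
    - 4 * γ ^ 2 * (1 + γ ^ 2) * expQuadTail γ 1 x + 4 * γ ^ 2 * expQuadTail γ 2 x

section
variable {γ : ℝ}

theorem hasDerivAt_expQuadMomentPrimitive (hγ : γ ≠ 0) (x : ℝ) :
    HasDerivAt (expQuadMomentPrimitive γ) (x * (x - 1 + exp (-x)) * expQuad γ 1 x) x := by
  have hpoly :
      HasDerivAt (fun x ↦ 4 * γ ^ 4 + 2 * γ ^ 2 - 2 * γ ^ 2 * x) (-(2 * γ ^ 2)) x := by
    simpa using ((hasDerivAt_id' x).const_mul (2 * γ ^ 2)).const_sub (4 * γ ^ 4 + 2 * γ ^ 2)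
  refine ((((hpoly.mul (hasDerivAt_expQuad 1 hγ x)).sub
    ((hasDerivAt_expQuad 2 hγ x).const_mul (2 * γ ^ 2))).sub
    ((hasDerivAt_expQuadTail 1 hγ x).const_mul (4 * γ ^ 2 * (1 + γ ^ 2)))).add
    ((hasDerivAt_expQuadTail 2 hγ x).const_mul (4 * γ ^ 2))).congr_deriv ?_
  have hE₂ : expQuad γ 2 x = exp (-x) * expQuad γ 1 x := by
    rw [exp_neg_mul_expQuad, one_add_one_eq_two]
  rw [hE₂]
  field_simp
  ring

theorem tendsto_expQuadMomentPrimitive (hγ : 0 < γ) :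
    Tendsto (expQuadMomentPrimitive γ) atTop (𝓝 0) := by
  have h := (((((tendsto_pow_mul_expQuad (γ := γ) 1 one_pos 0).const_mul
    (4 * γ ^ 4 + 2 * γ ^ 2)).sub
    ((tendsto_pow_mul_expQuad (γ := γ) 1 one_pos 1).const_mul (2 * γ ^ 2))).sub
    ((tendsto_pow_mul_expQuad (γ := γ) 2 two_pos 0).const_mul (2 * γ ^ 2))).sub
    ((tendsto_expQuadTail 1 hγ).const_mul (4 * γ ^ 2 * (1 + γ ^ 2)))).add
    ((tendsto_expQuadTail 2 hγ).const_mul (4 * γ ^ 2))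
  simp only [mul_zero, sub_zero, add_zero] at h
  refine h.congr fun x ↦ ?_
  rw [expQuadMomentPrimitive]
  ring

theorem expQuad_moment_nonneg {x : ℝ} (hx : 0 ≤ x) :
    0 ≤ x * (x - 1 + exp (-x)) * expQuad γ 1 x :=
  mul_nonneg (mul_nonneg hx (by linarith [add_one_le_exp (-x)])) (exp_pos _).le

theorem integrableOn_expQuad_moment (hγ : 0 < γ) :
    IntegrableOn (fun x ↦ x * (x - 1 + exp (-x)) * expQuad γ 1 x) (Ioi 0) :=
  integrableOn_Ioi_deriv_of_nonneg' (fun x _ ↦ hasDerivAt_expQuadMomentPrimitive hγ.ne' x)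
    (fun _ hx ↦ expQuad_moment_nonneg (le_of_lt hx)) (tendsto_expQuadMomentPrimitive hγ)

theorem integral_expQuad_moment (hγ : 0 < γ) :
    ∫ x in Ioi 0, x * (x - 1 + exp (-x)) * expQuad γ 1 x
      = 8 * γ ^ 3 * (1 + γ ^ 2) * W γ - 4 * γ ^ 4 - 8 * γ ^ 3 * W (2 * γ) := by
  rw [integral_Ioi_of_hasDerivAt_of_nonneg'
    (fun x _ ↦ hasDerivAt_expQuadMomentPrimitive hγ.ne' x)
    (fun _ hx ↦ expQuad_moment_nonneg (le_of_lt hx)) (tendsto_expQuadMomentPrimitive hγ)]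
  simp only [expQuadMomentPrimitive, expQuadTail_zero, expQuad]
  norm_num
  ring

end

theorem intervalIntegral_integral_swap_of_nonneg {α : Type*} [MeasurableSpace α]
    [TopologicalSpace α] [OpensMeasurableSpace α] [SecondCountableTopology α]
    {μ : Measure α} [SFinite μ] {F : ℝ → α → ℝ} {a b : ℝ} (hab : a ≤ b)
    (hF : Continuous (Function.uncurry F))
    (hF₀ : ∀ᵐ x ∂μ, ∀ φ ∈ Ioc a b, 0 ≤ F φ x)
    (hint : Integrable (fun x ↦ ∫ φ in a..b, F φ x) μ) :
    ∫ φ in a..b, ∫ x, F φ x ∂μ = ∫ x, (∫ φ in a..b, F φ x) ∂μ := by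
  refine intervalIntegral_integral_swap ((integrable_prod_iff' ?_).2 ⟨?_, ?_⟩)
  · exact hF.aestronglyMeasurable
  · refine .of_forall fun x ↦ (IntervalIntegrable.def' ?_)
    exact (hF.comp (by fun_prop : Continuous fun φ : ℝ ↦ (φ, x))).intervalIntegrable a b
  · refine hint.congr (hF₀.mono fun x hx ↦ ?_)
    simp only [uIoc_of_le hab, intervalIntegral.integral_of_le hab, Function.uncurry_apply_pair]
    exact setIntegral_congr_fun measurableSet_Ioc fun φ hφ ↦
      (Real.norm_of_nonneg (hx φ hφ)).symm

theorem integral_integral_mul_exp_neg_mul_div {c : ℝ} (hc : c ≠ 0) (y : ℝ) :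
    ∫ φ in 0..c, ∫ x in 0..y, x * exp (-(x * φ / c)) = c * (y - 1 + exp (-y)) := by
  have hφ (x : ℝ) : ∫ φ in 0..c, x * exp (-(x * φ / c)) = c * (1 - exp (-x)) := by
    have hderiv (φ : ℝ) :
        HasDerivAt (fun φ ↦ -c * exp (-(x * φ / c))) (x * exp (-(x * φ / c))) φ := by
      refine ((((hasDerivAt_id' φ).const_mul x).div_const c).neg.exp.const_mul (-c)).congr_deriv
        ?_
      field_simp
      rfl
    rw [intervalIntegral.integral_eq_sub_of_hasDerivAt (fun φ _ ↦ hderiv φ)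
      ((by fun_prop : Continuous fun φ ↦ x * exp (-(x * φ / c))).intervalIntegrable _ _),
      mul_div_cancel_right₀ x hc]
    simp only [mul_zero, zero_div, neg_zero, exp_zero]
    ring
  have hx : ∫ x in 0..y, c * (1 - exp (-x)) = c * (y - 1 + exp (-y)) := by
    have hderiv (x : ℝ) : HasDerivAt (fun x ↦ c * (x + exp (-x))) (c * (1 - exp (-x))) x := by
      refine (((hasDerivAt_id' x).add (hasDerivAt_neg' x).exp).const_mul c).congr_deriv ?_
      ring
    rw [intervalIntegral.integral_eq_sub_of_hasDerivAt (fun x _ ↦ hderiv x)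
      ((by fun_prop : Continuous fun x ↦ c * (1 - exp (-x))).intervalIntegrable _ _)]
    simp only [neg_zero, exp_zero]
    ring
  have hint : IntegrableOn (Function.uncurry fun φ x ↦ x * exp (-(x * φ / c)))
      (uIoc 0 c ×ˢ uIoc 0 y) :=
    ((by fun_prop : Continuous fun p : ℝ × ℝ ↦ p.2 * exp (-(p.2 * p.1 / c))).continuousOn
      |>.integrableOn_compact (isCompact_uIcc.prod isCompact_uIcc)).mono_set
      (prod_mono uIoc_subset_uIcc uIoc_subset_uIcc)
  rw [intervalIntegral_intervalIntegral_swap hint]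
  simp only [hφ, hx]

theorem integral_integral_integral_eq_mul_integral_expQuad_moment {c γ : ℝ} (hc : 0 < c)
    (hγ : 0 < γ) :
    ∫ φ in 0..c, ∫ x₂ in Ioi 0, ∫ x₁ in 0..x₂,
        x₁ * x₂ * exp (-(x₁ * φ / c) - x₂ - x₂ ^ 2 / (4 * γ ^ 2))
      = c * ∫ x in Ioi 0, x * (x - 1 + exp (-x)) * expQuad γ 1 x := by
  have hfactor (φ x₂ : ℝ) :
      ∫ x₁ in 0..x₂, x₁ * x₂ * exp (-(x₁ * φ / c) - x₂ - x₂ ^ 2 / (4 * γ ^ 2))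
        = x₂ * expQuad γ 1 x₂ * ∫ x₁ in 0..x₂, x₁ * exp (-(x₁ * φ / c)) := by
    rw [← intervalIntegral.integral_const_mul]
    congr 1 with x₁
    rw [expQuad, show -(x₁ * φ / c) - x₂ - x₂ ^ 2 / (4 * γ ^ 2)
      = -(x₁ * φ / c) + (-(1 * x₂) - x₂ ^ 2 / (4 * γ ^ 2)) by ring, exp_add]
    ring
  have hinner (x₂ : ℝ) :
      ∫ φ in 0..c, x₂ * expQuad γ 1 x₂ * ∫ x₁ in 0..x₂, x₁ * exp (-(x₁ * φ / c))
        = c * (x₂ * (x₂ - 1 + exp (-x₂)) * expQuad γ 1 x₂) := by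
    rw [intervalIntegral.integral_const_mul, integral_integral_mul_exp_neg_mul_div hc.ne']
    ring
  simp only [hfactor]
  rw [intervalIntegral_integral_swap_of_nonneg hc.le ?_ ?_ ?_]
  · simp only [hinner]
    exact integral_const_mul c _
  · unfold expQuad
    fun_prop
  · refine ae_restrict_of_forall_mem measurableSet_Ioi fun x₂ hx₂ _ _ ↦ ?_
    refine mul_nonneg (mul_nonneg (le_of_lt hx₂) (exp_pos _).le) ?_
    exact intervalIntegral.integral_nonneg (le_of_lt hx₂) fun x₁ hx₁ ↦
      mul_nonneg hx₁.1 (exp_pos _).le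
  · simp only [hinner]
    exact (integrableOn_expQuad_moment hγ).const_mul c

theorem linear_approx_lower_bound_closed_form (γ : ℝ) (hγ : 0 < γ) :
    2 + γ ^ 2 - γ * (5 + 2 * γ ^ 2) * W γ -
      (1 / (4 * γ ^ 4 * π)) *
        ∫ φ in (0 : ℝ)..π,
          ∫ x₂ in Set.Ioi (0 : ℝ),
            ∫ x₁ in (0 : ℝ)..x₂,
              x₁ * x₂ * Real.exp (-(x₁ * φ / π) - x₂ - x₂ ^ 2 / (4 * γ ^ 2))
    = (1 / γ) * (3 * γ + γ ^ 3 - W γ * (2 * γ ^ 4 + 7 * γ ^ 2 + 2) + 2 * W (2 * γ)) := by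
  rw [integral_integral_integral_eq_mul_integral_expQuad_moment pi_pos hγ,
    integral_expQuad_moment hγ]
  field_simp
  ring
end

section
/- Let u, v₁, v₂ be vectors in ℝ², and for t > 0 let B_t = { s·t·u : s ∈ [0,1] } and S_i = { s·v_i : s ∈ [0,1] } for i = 1, 2. Then for every ℓ > 0 and every real c ≥ 1, the 2-dimensional Lebesgue measure satisfies vol( (S₁ ∪ S₂) + B_{cℓ} ) ≤ c · vol( (S₁ ∪ S₂) + B_ℓ ), where + denotes the Minkowski sum of sets. -/
/-!
Write `F t = S + [0, t] • w` for `S = S₁ ∪ S₂` and `w = ℓ • u`, and `g t = vol (F t)`. A point of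
`F (t + h) \ F t` has the form `y + r • w` with `t < r`; translating it by `-(t - s) • w` lands in
`F (s + h) \ F s` whenever `0 ≤ s ≤ t`. By translation invariance of the volume, the increments
`g (t + h) - g t` are antitone in `t`, which makes `g` concave on a grid of step `h`. Together with
`g 0 ≥ 0` this gives `m * g (n * h) ≤ n * g (m * h)` for `m ≤ n`, and since `g` is monotone,
letting the grid refine yields `g c ≤ c * g 1`.
-/

open MeasureTheory Pointwise Filter Topology Set

open Finset in
theorem mul_le_mul_of_antitone_sub_succ {a : ℕ → ℝ} (ha₀ : 0 ≤ a 0)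
    (ha : Antitone fun k => a (k + 1) - a k) {m n : ℕ} (hmn : m ≤ n) :
    m * a n ≤ n * a m := by
  have step (n : ℕ) : n * a (n + 1) ≤ (n + 1) * a n := by
    have hsum : n • (a (n + 1) - a n) ≤ ∑ k ∈ range n, (a (k + 1) - a k) := by
      simpa using card_nsmul_le_sum (range n) _ _ fun k hk => ha (mem_range.1 hk).le
    rw [sum_range_sub, nsmul_eq_mul] at hsum
    linarith
  induction n, hmn using Nat.le_induction with
  | base => rfl
  | succ n hmn ih =>
    push_cast
    rcases Nat.eq_zero_or_pos m with rfl | hm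
    · simpa using (show (0 : ℝ) ≤ (n + 1) * a 0 by positivity)
    have hn : (0 : ℝ) < n := by exact_mod_cast hm.trans_le hmn
    nlinarith [step n]

theorem Monotone.apply_mul_le_mul_apply_of_antitone_increments {g : ℝ → ℝ} (hg : Monotone g)
    (hg₀ : 0 ≤ g 0)
    (hinc : ∀ s t h, 0 ≤ s → s ≤ t → 0 ≤ h → g (t + h) - g t ≤ g (s + h) - g s)
    {ℓ c : ℝ} (hℓ : 0 ≤ ℓ) (hc : 1 ≤ c) : g (c * ℓ) ≤ c * g ℓ := by
  have hgℓ : 0 ≤ g ℓ := hg₀.trans (hg hℓ)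
  have approx (N : ℕ) (hN : 0 < N) : g (c * ℓ) ≤ (c + 1 / N) * g ℓ := by
    have hN' : (0 : ℝ) < N := by exact_mod_cast hN
    set n := ⌈c * N⌉₊
    have hn : c * N ≤ n := Nat.le_ceil _
    have hn' : (n : ℝ) < c * N + 1 := Nat.ceil_lt_add_one (by positivity)
    set h := ℓ / N
    have hh : 0 ≤ h := by positivity
    have hNh : N * h = ℓ := mul_div_cancel₀ ℓ hN'.ne'
    have hgrid : N * g (n * h) ≤ n * g (N * h) :=
      mul_le_mul_of_antitone_sub_succ (a := fun k => g (k * h)) (by simpa using hg₀)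
        (fun k k' hkk' => by
          simpa [add_one_mul] using hinc (k * h) (k' * h) h (by positivity) (by gcongr) hh)
        (by exact_mod_cast (show (N : ℝ) ≤ n by nlinarith))
    rw [hNh] at hgrid
    calc g (c * ℓ) ≤ g (n * h) := hg (by rw [← hNh, ← mul_assoc]; gcongr)
      _ ≤ n / N * g ℓ := by rw [div_mul_eq_mul_div, le_div_iff₀ hN']; linarith
      _ ≤ (c + 1 / N) * g ℓ := by
        gcongr
        rw [div_le_iff₀ hN']
        field_simp
        linarith
  have hlim : Tendsto (fun N : ℕ => (c + 1 / ((N : ℝ) + 1)) * g ℓ) atTop (𝓝 (c * g ℓ)) := by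
    simpa using (tendsto_one_div_add_atTop_nhds_zero_nat.const_add c).mul_const (g ℓ)
  exact ge_of_tendsto' hlim fun N => by simpa using approx (N + 1) N.succ_pos

section Sweep

variable {E : Type*} [AddCommGroup E] [Module ℝ E]

def sweep (S : Set E) (w : E) (t : ℝ) : Set E := S + (fun s : ℝ => s • w) '' Icc 0 t

theorem sweep_mono (S : Set E) (w : E) : Monotone (sweep S w) := fun _ _ h =>
  add_subset_add_left (image_mono (Icc_subset_Icc_right h))

theorem IsCompact.sweep [TopologicalSpace E] [IsTopologicalAddGroup E] [ContinuousSMul ℝ E]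
    {S : Set E} (hS : IsCompact S) (w : E) (t : ℝ) : IsCompact (sweep S w t) :=
  hS.add (isCompact_Icc.image (by fun_prop))

theorem sweep_diff_subset_vadd (S : Set E) (w : E) {s t : ℝ} (h : ℝ) (hs : 0 ≤ s) (hst : s ≤ t) :
    sweep S w (t + h) \ sweep S w t ⊆ (t - s) • w +ᵥ (sweep S w (s + h) \ sweep S w s) := by
  rintro _ ⟨⟨y, hy, _, ⟨r, hr, rfl⟩, rfl⟩, hnot⟩
  have hrt : t < r := lt_of_not_ge fun hrt => hnot ⟨y, hy, r • w, ⟨r, ⟨hr.1, hrt⟩, rfl⟩, rfl⟩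
  refine ⟨y + (r - (t - s)) • w,
    ⟨⟨y, hy, _, ⟨r - (t - s), ⟨by linarith, by linarith [hr.2]⟩, rfl⟩, rfl⟩, ?_⟩, ?_⟩
  · rintro ⟨y', hy', _, ⟨q, hq, rfl⟩, hx⟩
    refine hnot ⟨y', hy', (q + (t - s)) • w, ⟨_, ⟨by linarith [hq.1], by linarith [hq.2]⟩, rfl⟩, ?_⟩
    linear_combination (norm := module) hx
  · simp only [vadd_eq_add]
    module

variable [MeasurableSpace E] (μ : Measure E) [μ.IsAddLeftInvariant]

theorem measure_sweep_diff_le (S : Set E) (w : E) {s t : ℝ} (h : ℝ) (hs : 0 ≤ s) (hst : s ≤ t) :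
    μ (sweep S w (t + h) \ sweep S w t) ≤ μ (sweep S w (s + h) \ sweep S w s) :=
  (measure_mono (sweep_diff_subset_vadd S w h hs hst)).trans_eq (measure_vadd μ _ _)

variable [TopologicalSpace E] [IsTopologicalAddGroup E] [ContinuousSMul ℝ E] [T2Space E]
  [BorelSpace E] [IsFiniteMeasureOnCompacts μ]

theorem measureReal_sweep_add_sub_le {S : Set E} (hS : IsCompact S) (w : E) {s t h : ℝ}
    (hs : 0 ≤ s) (hst : s ≤ t) (hh : 0 ≤ h) :
    μ.real (sweep S w (t + h)) - μ.real (sweep S w t) ≤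
      μ.real (sweep S w (s + h)) - μ.real (sweep S w s) := by
  have hfin (t : ℝ) : μ (sweep S w t) ≠ ⊤ := (hS.sweep w t).measure_lt_top.ne
  rw [← measureReal_sdiff (sweep_mono S w (le_add_of_nonneg_right hh))
      (hS.sweep w t).isClosed.measurableSet (hfin _),
    ← measureReal_sdiff (sweep_mono S w (le_add_of_nonneg_right hh))
      (hS.sweep w s).isClosed.measurableSet (hfin _)]
  exact ENNReal.toReal_mono (measure_ne_top_of_subset sdiff_subset (hfin _))
    (measure_sweep_diff_le μ S w h hs hst)

theorem measure_sweep_mul_le {S : Set E} (hS : IsCompact S) (w : E) {ℓ c : ℝ} (hℓ : 0 ≤ ℓ)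
    (hc : 1 ≤ c) : μ (sweep S w (c * ℓ)) ≤ ENNReal.ofReal c * μ (sweep S w ℓ) := by
  have hfin (t : ℝ) : μ (sweep S w t) ≠ ⊤ := (hS.sweep w t).measure_lt_top.ne
  have key : μ.real (sweep S w (c * ℓ)) ≤ c * μ.real (sweep S w ℓ) :=
    Monotone.apply_mul_le_mul_apply_of_antitone_increments (g := fun t => μ.real (sweep S w t))
      (fun _ _ hab => measureReal_mono (sweep_mono S w hab) (hfin _)) measureReal_nonneg
      (fun _ _ _ hs hst hh => measureReal_sweep_add_sub_le μ hS w hs hst hh) hℓ hc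
  rw [← ofReal_measureReal (hfin _), ← ofReal_measureReal (hfin _),
    ← ENNReal.ofReal_mul (zero_le_one.trans hc)]
  exact ENNReal.ofReal_le_ofReal key

end Sweep

theorem image_smul_Icc_zero_one {E : Type*} [AddCommGroup E] [Module ℝ E] (w : E) {a : ℝ}
    (ha : 0 ≤ a) : (fun s : ℝ => s • (a • w)) '' Icc 0 1 = (fun s : ℝ => s • w) '' Icc 0 a := by
  have hcomp : (fun s : ℝ => s • (a • w)) = (fun s : ℝ => s • w) ∘ (fun s => a * s) := by
    ext s
    simp [smul_smul, mul_comm]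
  rw [hcomp, image_comp, image_mul_left_Icc ha zero_le_one, mul_zero, mul_one]

theorem minkowski_sum_scaling_general (u v₁ v₂ : EuclideanSpace ℝ (Fin 2)) (ℓ c : ℝ)
    (hc : 1 ≤ c) :
    volume ((((fun s : ℝ => s • v₁) '' Set.Icc 0 1) ∪
              ((fun s : ℝ => s • v₂) '' Set.Icc 0 1)) +
            ((fun s : ℝ => s • ((c * ℓ) • u)) '' Set.Icc 0 1))
      ≤ ENNReal.ofReal c *
        volume ((((fun s : ℝ => s • v₁) '' Set.Icc 0 1) ∪
                  ((fun s : ℝ => s • v₂) '' Set.Icc 0 1)) +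
                ((fun s : ℝ => s • (ℓ • u)) '' Set.Icc 0 1)) := by
  have hS : IsCompact (((fun s : ℝ => s • v₁) '' Icc 0 1) ∪ ((fun s : ℝ => s • v₂) '' Icc 0 1)) :=
    (isCompact_Icc.image (by fun_prop)).union (isCompact_Icc.image (by fun_prop))
  rw [mul_smul, image_smul_Icc_zero_one _ (zero_le_one.trans hc)]
  have h := measure_sweep_mul_le volume hS (ℓ • u) zero_le_one hc
  rw [mul_one] at h
  exact h

theorem minkowski_sum_scaling (u v₁ v₂ : EuclideanSpace ℝ (Fin 2)) (ℓ c : ℝ)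
    (hℓ : 0 < ℓ) (hc : 1 ≤ c) :
    volume ((((fun s : ℝ => s • v₁) '' Set.Icc 0 1) ∪
              ((fun s : ℝ => s • v₂) '' Set.Icc 0 1)) +
            ((fun s : ℝ => s • ((c * ℓ) • u)) '' Set.Icc 0 1))
      ≤ ENNReal.ofReal c *
        volume ((((fun s : ℝ => s • v₁) '' Set.Icc 0 1) ∪
                  ((fun s : ℝ => s • v₂) '' Set.Icc 0 1)) +
                ((fun s : ℝ => s • (ℓ • u)) '' Set.Icc 0 1)) :=
  minkowski_sum_scaling_general u v₁ v₂ ℓ c hc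
end

section
/- Let 0 < θ ≤ Φ < π and R₁, R₂, ℓ > 0. Set b = ℓ·(cos θ, sin θ), v₁ = R₁·(cos Φ, sin Φ), v₂ = (R₂, 0), and let P_i = { s·v_i + t·b : s, t ∈ [0,1] } for i = 1, 2 be the two closed parallelograms spanned by v_i and b. Then the 2-dimensional Lebesgue measure of their union satisfies vol(P₁ ∪ P₂) = ℓ·R₁·sin(Φ − θ) + ℓ·R₂·sin θ. -/
open MeasureTheory Real

noncomputable def pmapL (v w : ℝ × ℝ) : (ℝ × ℝ) →ₗ[ℝ] (ℝ × ℝ) :=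
  (LinearMap.fst ℝ ℝ ℝ).smulRight v + (LinearMap.snd ℝ ℝ ℝ).smulRight w

lemma pmapL_apply (v w : ℝ × ℝ) (p : ℝ × ℝ) : pmapL v w p = p.1 • v + p.2 • w := rfl

lemma pmapL_det (v w : ℝ × ℝ) : LinearMap.det (pmapL v w) = v.1 * w.2 - v.2 * w.1 := by
  rw [← LinearMap.det_toMatrix (Module.Basis.finTwoProd ℝ), Matrix.det_fin_two]
  simp [LinearMap.toMatrix_apply, pmapL_apply, Module.Basis.finTwoProd_zero, Module.Basis.finTwoProd_one]
  ring

lemma par_vol (v w : ℝ × ℝ) :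
    volume (Set.image2 (fun s t : ℝ => s • v + t • w) (Set.Icc 0 1) (Set.Icc 0 1))
      = ENNReal.ofReal |v.1 * w.2 - v.2 * w.1| := by
  rw [← Set.image_prod]
  have h1 : (fun x : ℝ × ℝ => x.1 • v + x.2 • w) = ⇑(pmapL v w) := rfl
  rw [h1, Measure.addHaar_image_linearMap, pmapL_det,
    show (volume : Measure (ℝ×ℝ)) = (volume).prod volume from rfl, Measure.prod_prod]
  simp [Real.volume_Icc]

theorem union_parallelogram_area (θ Φ R₁ R₂ ℓ : ℝ)
    (hθ : 0 < θ) (hθΦ : θ ≤ Φ) (hΦ : Φ < π)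
    (hR₁ : 0 < R₁) (hR₂ : 0 < R₂) (hℓ : 0 < ℓ) :
    volume
        ((Set.image2 (fun s t : ℝ =>
            s • ((R₁ * Real.cos Φ, R₁ * Real.sin Φ) : ℝ × ℝ) +
            t • ((ℓ * Real.cos θ, ℓ * Real.sin θ) : ℝ × ℝ)) (Set.Icc 0 1) (Set.Icc 0 1)) ∪
         (Set.image2 (fun s t : ℝ =>
            s • ((R₂, 0) : ℝ × ℝ) +
            t • ((ℓ * Real.cos θ, ℓ * Real.sin θ) : ℝ × ℝ)) (Set.Icc 0 1) (Set.Icc 0 1)))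
      = ENNReal.ofReal (ℓ * R₁ * Real.sin (Φ - θ) + ℓ * R₂ * Real.sin θ) := by
  have hθπ : θ < π := lt_of_le_of_lt hθΦ hΦ
  have hsθ : 0 < Real.sin θ := Real.sin_pos_of_pos_of_lt_pi hθ hθπ
  have hsΦθ : 0 ≤ Real.sin (Φ - θ) :=
    Real.sin_nonneg_of_nonneg_of_le_pi (by linarith) (by linarith)
  set v₁ : ℝ × ℝ := (R₁ * Real.cos Φ, R₁ * Real.sin Φ) with hv₁
  set v₂ : ℝ × ℝ := (R₂, 0) with hv₂
  set b : ℝ × ℝ := (ℓ * Real.cos θ, ℓ * Real.sin θ) with hb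
  set P₁ := Set.image2 (fun s t : ℝ => s • v₁ + t • b) (Set.Icc 0 1) (Set.Icc 0 1) with hP₁
  set P₂ := Set.image2 (fun s t : ℝ => s • v₂ + t • b) (Set.Icc 0 1) (Set.Icc 0 1) with hP₂
  -- the cross-product functional with b
  set f : (ℝ × ℝ) →ₗ[ℝ] ℝ :=
    (ℓ * Real.cos θ) • (LinearMap.snd ℝ ℝ ℝ) - (ℓ * Real.sin θ) • (LinearMap.fst ℝ ℝ ℝ) with hf
  have hfapp : ∀ p : ℝ × ℝ, f p = (ℓ * Real.cos θ) * p.2 - (ℓ * Real.sin θ) * p.1 := by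
    intro p; simp [hf]; try ring
  have hcross1 : (ℓ * Real.cos θ) * v₁.2 - (ℓ * Real.sin θ) * v₁.1
      = ℓ * R₁ * Real.sin (Φ - θ) := by
    simp only [hv₁, Real.sin_sub]; ring
  have hP₁sub : P₁ ⊆ {p : ℝ × ℝ | 0 ≤ f p} := by
    rintro p ⟨s, hs, t, ht, rfl⟩
    simp only [Set.mem_setOf_eq, hfapp]
    have : (ℓ * Real.cos θ) * (s • v₁ + t • b).2 - (ℓ * Real.sin θ) * (s • v₁ + t • b).1
        = s * ((ℓ * Real.cos θ) * v₁.2 - (ℓ * Real.sin θ) * v₁.1) := by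
      simp [hb]; try ring
    rw [this, hcross1]
    have : 0 ≤ ℓ * R₁ * Real.sin (Φ - θ) := by positivity
    exact mul_nonneg hs.1 this
  have hP₂sub : P₂ ⊆ {p : ℝ × ℝ | f p ≤ 0} := by
    rintro p ⟨s, hs, t, ht, rfl⟩
    simp only [Set.mem_setOf_eq, hfapp]
    have : (ℓ * Real.cos θ) * (s • v₂ + t • b).2 - (ℓ * Real.sin θ) * (s • v₂ + t • b).1
        = -(s * (ℓ * Real.sin θ * R₂)) := by
      simp [hb, hv₂]; ring
    rw [this]
    have : 0 ≤ s * (ℓ * Real.sin θ * R₂) := by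
      apply mul_nonneg hs.1; positivity
    linarith
  have hker : LinearMap.ker f ≠ ⊤ := by
    intro h
    have : f (1, 0) = 0 := by
      have : (1, 0) ∈ LinearMap.ker f := by rw [h]; trivial
      exact this
    rw [hfapp] at this
    norm_num at this
    rcases this with h | h
    · linarith
    · linarith
  have hnull : volume (P₁ ∩ P₂) = 0 := by
    apply measure_mono_null _ (Measure.addHaar_submodule volume (LinearMap.ker f) hker)
    rintro p ⟨h1, h2⟩
    have := hP₁sub h1
    have := hP₂sub h2
    simp only [Set.mem_setOf_eq] at *
    exact LinearMap.mem_ker.mpr (le_antisymm ‹f p ≤ 0› ‹0 ≤ f p›)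
  have hm : MeasurableSet P₂ := by
    rw [hP₂, ← Set.image_prod]
    exact (((isCompact_Icc.prod isCompact_Icc).image (by fun_prop)).measurableSet)
  have key := measure_union_add_inter (μ := (volume : Measure (ℝ × ℝ))) P₁ hm
  rw [hnull, add_zero] at key
  rw [key, hP₁, hP₂, par_vol, par_vol]
  have e1 : |v₁.1 * b.2 - v₁.2 * b.1| = ℓ * R₁ * Real.sin (Φ - θ) := by
    have : v₁.1 * b.2 - v₁.2 * b.1 = -(ℓ * R₁ * Real.sin (Φ - θ)) := by
      simp only [hv₁, hb, Real.sin_sub]; ring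
    rw [this, abs_neg, abs_of_nonneg (by positivity)]
  have e2 : |v₂.1 * b.2 - v₂.2 * b.1| = ℓ * R₂ * Real.sin θ := by
    have : v₂.1 * b.2 - v₂.2 * b.1 = ℓ * R₂ * Real.sin θ := by
      simp only [hv₂, hb]; ring
    rw [this, abs_of_nonneg (by positivity)]
  rw [e1, e2, ← ENNReal.ofReal_add (by positivity) (by positivity)]
end

section
/- For every real γ > 0 and every c ∈ (0, 1), ∫₀^∞ ∫₀^{x₂} exp(−x₁) · x₁ · x₂ · exp( −(c·x₂² + (1 − c)·x₁²)/(4γ²) ) dx₁ dx₂ = (4γ⁴/c) · (1 − 2γ·W(γ)). -/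
/-!
The integrand factors as `f x₁ * g x₂` with `f x = x e^{-x - (1-c) x²/(4γ²)}` and
`g x = x e^{-c x²/(4γ²)}`. Swapping the order of integration over the triangle `0 ≤ x₁ ≤ x₂`
turns the inner integral into the Gaussian tail `∫_{x₁}^∞ g = (2γ²/c) e^{-c x₁²/(4γ²)}`, leaving
`(2γ²/c) J` with `J = ∫₀^∞ x e^{-x - x²/(4γ²)} dx`. As `-e^{-x - x²/(4γ²)}` is a primitive of
`(1 + x/(2γ²)) e^{-x - x²/(4γ²)}`, `J = 2γ² (1 - I)` with `I = ∫₀^∞ e^{-x - x²/(4γ²)} dx`, and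
completing the square `x/(2γ) + γ` gives `I = 2γ W(γ)`.
-/

open MeasureTheory Real

open Set Filter

theorem integral_Ioi_comp_add_right (f : ℝ → ℝ) (a d : ℝ) :
    ∫ x in Ioi a, f (x + d) = ∫ x in Ioi (a + d), f x := by
  rw [← integral_indicator measurableSet_Ioi, ← integral_indicator measurableSet_Ioi,
    ← integral_add_right_eq_self ((Ioi (a + d)).indicator f) d]
  congr 1 with x
  simp only [indicator_apply, mem_Ioi, add_lt_add_iff_right]

theorem IntegrableOn.mul_exp_neg_Ioi {g : ℝ → ℝ} {a : ℝ} (hg : IntegrableOn g (Ioi a)) :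
    IntegrableOn (fun x => g x * exp (-x)) (Ioi a) := by
  refine Integrable.mul_bdd (c := exp (-a)) hg (by fun_prop) ?_
  filter_upwards [ae_restrict_mem measurableSet_Ioi] with x (hx : a < x)
  rw [norm_of_nonneg (exp_pos _).le]
  exact exp_le_exp.mpr (by linarith)

theorem integral_Ioi_intervalIntegral_mul_eq {f g : ℝ → ℝ} {a : ℝ}
    (hf : IntegrableOn f (Ioi a)) (hg : IntegrableOn g (Ioi a)) :
    ∫ y in Ioi a, ∫ x in a..y, f x * g y = ∫ x in Ioi a, f x * ∫ y in Ioi x, g y := by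
  set F : ℝ × ℝ → ℝ := {p : ℝ × ℝ | p.2 ≤ p.1}.indicator fun p => g p.1 * f p.2
  have hF : Integrable F ((volume.restrict (Ioi a)).prod (volume.restrict (Ioi a))) :=
    (hg.mul_prod hf).indicator (measurableSet_le measurable_snd measurable_fst)
  calc ∫ y in Ioi a, ∫ x in a..y, f x * g y = ∫ y in Ioi a, ∫ x in Ioi a, F (y, x) := by
        refine setIntegral_congr_fun measurableSet_Ioi fun y (hy : a < y) => ?_
        have hslice : (fun x => F (y, x)) = (Iic y).indicator fun x => f x * g y := by
          ext x; simp [F, indicator_apply, mul_comm]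
        rw [intervalIntegral.integral_of_le hy.le, hslice, integral_indicator measurableSet_Iic,
          Measure.restrict_restrict measurableSet_Iic, Iic_inter_Ioi]
    _ = ∫ x in Ioi a, ∫ y in Ioi a, F (y, x) := integral_integral_swap hF
    _ = ∫ x in Ioi a, f x * ∫ y in Ioi x, g y := by
        refine setIntegral_congr_fun measurableSet_Ioi fun x (hx : a < x) => ?_
        have hslice : (fun y => F (y, x)) = (Ici x).indicator fun y => g y * f x := by
          ext y; simp [F, indicator_apply]
        rw [hslice, integral_indicator measurableSet_Ici,
          Measure.restrict_restrict measurableSet_Ici, inter_eq_left.mpr (Ici_subset_Ioi.mpr hx),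
          integral_Ici_eq_integral_Ioi, integral_mul_const, mul_comm]

theorem integral_Ioi_mul_exp_neg_mul_sq {b : ℝ} (hb : 0 < b) (a : ℝ) :
    ∫ x in Ioi a, x * exp (-b * x ^ 2) = exp (-b * a ^ 2) / (2 * b) := by
  have hderiv : ∀ x ∈ Ici a,
      HasDerivAt (fun x => -exp (-b * x ^ 2) / (2 * b)) (x * exp (-b * x ^ 2)) x := by
    intro x _
    refine ((((hasDerivAt_pow 2 x).const_mul (-b)).exp.neg).div_const (2 * b)).congr_deriv ?_
    field_simp
    ring
  have hlim : Tendsto (fun x => -exp (-b * x ^ 2) / (2 * b)) atTop (nhds 0) := by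
    have hsq : Tendsto (fun x : ℝ => -b * x ^ 2) atTop atBot :=
      (tendsto_pow_atTop two_ne_zero).const_mul_atTop_of_neg (neg_neg_of_pos hb)
    simpa using ((tendsto_exp_atBot.comp hsq).neg).div_const (2 * b)
  rw [integral_Ioi_of_hasDerivAt_of_tendsto' hderiv
    (integrable_mul_exp_neg_mul_sq hb).integrableOn hlim]
  ring

theorem integrableOn_Ioi_zero_exp_neg_mul_sq_sub {b : ℝ} (hb : 0 < b) :
    IntegrableOn (fun x => exp (-b * x ^ 2 - x)) (Ioi 0) := by
  simpa only [sub_eq_add_neg, exp_add] using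
    IntegrableOn.mul_exp_neg_Ioi (integrable_exp_neg_mul_sq hb).integrableOn

theorem integrableOn_Ioi_zero_mul_exp_neg_mul_sq_sub {b : ℝ} (hb : 0 < b) :
    IntegrableOn (fun x => x * exp (-b * x ^ 2 - x)) (Ioi 0) := by
  simpa only [sub_eq_add_neg, exp_add, mul_assoc] using
    IntegrableOn.mul_exp_neg_Ioi (integrable_mul_exp_neg_mul_sq hb).integrableOn

theorem integral_Ioi_zero_mul_exp_neg_mul_sq_sub {b : ℝ} (hb : 0 < b) :
    ∫ x in Ioi 0, x * exp (-b * x ^ 2 - x)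
      = (1 - ∫ x in Ioi 0, exp (-b * x ^ 2 - x)) / (2 * b) := by
  have hE := integrableOn_Ioi_zero_exp_neg_mul_sq_sub hb
  have hxE := integrableOn_Ioi_zero_mul_exp_neg_mul_sq_sub hb
  have hderiv : ∀ x ∈ Ici (0 : ℝ), HasDerivAt (fun x => -exp (-b * x ^ 2 - x))
      (2 * b * (x * exp (-b * x ^ 2 - x)) + exp (-b * x ^ 2 - x)) x := by
    intro x _
    refine ((((hasDerivAt_pow 2 x).const_mul (-b)).sub (hasDerivAt_id x)).exp).neg.congr_deriv ?_
    simp only [Pi.sub_apply, id]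
    ring
  have hlim : Tendsto (fun x => -exp (-b * x ^ 2 - x)) atTop (nhds 0) := by
    have hexpo : Tendsto (fun x : ℝ => -b * x ^ 2 - x) atTop atBot :=
      tendsto_atBot_mono (fun x => by nlinarith [sq_nonneg x]) tendsto_neg_atTop_atBot
    simpa using (tendsto_exp_atBot.comp hexpo).neg
  have hFTC := integral_Ioi_of_hasDerivAt_of_tendsto' hderiv
    ((hxE.const_mul (2 * b)).add hE) hlim
  rw [integral_add (hxE.const_mul _) hE, integral_const_mul] at hFTC
  simp only [zero_pow two_ne_zero, mul_zero, sub_zero, exp_zero, zero_sub, neg_neg] at hFTC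
  rw [eq_div_iff (by positivity)]
  linarith

theorem integral_Ioi_zero_exp_neg_inv_mul_sq_sub_eq_mul_W {γ : ℝ} (hγ : 0 < γ) :
    ∫ x in Ioi 0, exp (-(4 * γ ^ 2)⁻¹ * x ^ 2 - x) = 2 * γ * W γ := by
  have hsq : ∀ x : ℝ, exp (-(4 * γ ^ 2)⁻¹ * x ^ 2 - x)
      = exp (γ ^ 2) * exp (-(((2 * γ)⁻¹ * x + γ) ^ 2)) := fun x => by
    rw [← exp_add]
    congr 1
    field_simp
    ring
  have hscale := integral_comp_mul_left_Ioi (fun u => exp (-((u + γ) ^ 2))) 0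
    (inv_pos.mpr (mul_pos two_pos hγ))
  have hshift := integral_Ioi_comp_add_right (fun u => exp (-(u ^ 2))) 0 γ
  simp only [mul_zero, inv_inv, smul_eq_mul, zero_add] at hscale hshift
  rw [integral_congr_ae (ae_of_all _ hsq), integral_const_mul, hscale, hshift, W]
  ring

theorem selfblocking_marginal_term_x₁ (γ c : ℝ) (hγ : 0 < γ) (hc : c ∈ Set.Ioo (0 : ℝ) 1) :
    ∫ x₂ in Set.Ioi (0 : ℝ),
        ∫ x₁ in (0 : ℝ)..x₂,
          Real.exp (-x₁) * x₁ * x₂ *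
            Real.exp (-((c * x₂ ^ 2 + (1 - c) * x₁ ^ 2) / (4 * γ ^ 2)))
      = (4 * γ ^ 4 / c) * (1 - 2 * γ * W γ) := by
  obtain ⟨hc₀, hc₁⟩ := hc
  set b₁ := (1 - c) / (4 * γ ^ 2)
  set b₂ := c / (4 * γ ^ 2)
  have hb₁ : 0 < b₁ := div_pos (sub_pos.mpr hc₁) (by positivity)
  have hb₂ : 0 < b₂ := by positivity
  have hsplit : ∀ x₁ x₂ : ℝ, exp (-x₁) * x₁ * x₂ *
      exp (-((c * x₂ ^ 2 + (1 - c) * x₁ ^ 2) / (4 * γ ^ 2)))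
        = x₁ * exp (-b₁ * x₁ ^ 2) * exp (-x₁) * (x₂ * exp (-b₂ * x₂ ^ 2)) := fun x₁ x₂ => by
    rw [show -((c * x₂ ^ 2 + (1 - c) * x₁ ^ 2) / (4 * γ ^ 2)) = -b₁ * x₁ ^ 2 + -b₂ * x₂ ^ 2 by
      simp only [b₁, b₂]; ring, exp_add]
    ring
  have hmerge : ∀ x : ℝ, x * exp (-b₁ * x ^ 2) * exp (-x) * (exp (-b₂ * x ^ 2) / (2 * b₂))
      = (2 * b₂)⁻¹ * (x * exp (-(4 * γ ^ 2)⁻¹ * x ^ 2 - x)) := fun x => by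
    rw [show -(4 * γ ^ 2)⁻¹ * x ^ 2 - x = -b₁ * x ^ 2 + -x + -b₂ * x ^ 2 by
      simp only [b₁, b₂]; ring, exp_add, exp_add]
    ring
  simp only [hsplit]
  rw [integral_Ioi_intervalIntegral_mul_eq
      (IntegrableOn.mul_exp_neg_Ioi (integrable_mul_exp_neg_mul_sq hb₁).integrableOn)
      (integrable_mul_exp_neg_mul_sq hb₂).integrableOn]
  simp only [integral_Ioi_mul_exp_neg_mul_sq hb₂, hmerge]
  rw [integral_const_mul, integral_Ioi_zero_mul_exp_neg_mul_sq_sub (by positivity),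
    integral_Ioi_zero_exp_neg_inv_mul_sq_sub_eq_mul_W hγ]
  simp only [b₂]
  field_simp
  norm_num
end

section
/- For every real γ > 0, ∫₀^∞ ∫₀^{x₂} x₁ · x₂ · exp( −x₁ − x₂ − (x₁² + x₂²)/(8γ²) ) dx₁ dx₂ = 8γ⁴ · ( 1 − 2√2·γ·W(√2·γ) )². -/
open MeasureTheory Real

/-!
The integrand is `f x₁ · f x₂` with `f x = x · exp (-x - x² / (4 s²))`, `s = √2 γ`, and
`(∫ t in 0..x, f t)² / 2` is an antiderivative of `x ↦ f x · ∫ t in 0..x, f t`, so the ordered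
integral is half the square of the first moment `m = ∫₀^∞ f`. Since
`(1 + x / (2 s²)) · exp (-x - x² / (4 s²))` is an exact derivative of total integral `1`,
`m = 2 s² (1 - J)` with `J = ∫₀^∞ exp (-x - x² / (4 s²))`, and completing the square,
`-x - x² / (4 s²) = s² - (x / (2 s) + s)²`, gives `J = 2 s · W s`.
-/

open Set Filter Topology

theorem integral_Ioi_comp_mul_add {E : Type*} [NormedAddCommGroup E] [NormedSpace ℝ E]
    (g : ℝ → E) (a c : ℝ) {b : ℝ} (hb : 0 < b) :
    ∫ x in Ioi a, g (b * x + c) = b⁻¹ • ∫ x in Ioi (b * a + c), g x := by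
  have hshift : ∫ x in Ioi (b * a), g (x + c) = ∫ x in Ioi (b * a + c), g x := by
    simpa using (measurePreserving_add_right volume c).setIntegral_preimage_emb
      (measurableEmbedding_addRight c) g (Ioi (b * a + c))
  rw [integral_comp_mul_left_Ioi (fun x ↦ g (x + c)) a hb, hshift]

section LaplaceGauss

variable {s : ℝ}

theorem exp_neg_sub_sq_div_eq (hs : s ≠ 0) (x : ℝ) :
    exp (-x - x ^ 2 / (4 * s ^ 2)) = exp (s ^ 2) * exp (-((2 * s)⁻¹ * x + s) ^ 2) := by
  rw [← exp_add]
  congr 1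
  field_simp
  ring

theorem integral_Ioi_exp_neg_sub_sq_div (hs : 0 < s) :
    ∫ x in Ioi (0 : ℝ), exp (-x - x ^ 2 / (4 * s ^ 2)) = 2 * s * W s := by
  simp_rw [exp_neg_sub_sq_div_eq hs.ne', integral_const_mul]
  rw [integral_Ioi_comp_mul_add (fun t ↦ exp (-t ^ 2)) 0 s (by positivity), W]
  simp only [mul_inv_rev, inv_inv, mul_zero, zero_add, smul_eq_mul]
  ring

theorem tendsto_exp_neg_sub_sq_div_atTop (s : ℝ) :
    Tendsto (fun x ↦ exp (-x - x ^ 2 / (4 * s ^ 2))) atTop (𝓝 0) := by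
  refine tendsto_exp_atBot.comp (tendsto_atBot_mono (fun x ↦ ?_) tendsto_neg_atTop_atBot)
  have : 0 ≤ x ^ 2 / (4 * s ^ 2) := by positivity
  linarith

theorem hasDerivAt_neg_exp_neg_sub_sq_div (hs : s ≠ 0) (x : ℝ) :
    HasDerivAt (fun x ↦ -exp (-x - x ^ 2 / (4 * s ^ 2)))
      ((1 + x / (2 * s ^ 2)) * exp (-x - x ^ 2 / (4 * s ^ 2))) x := by
  have hexponent : HasDerivAt (fun x ↦ -x - x ^ 2 / (4 * s ^ 2)) (-1 - 2 * x / (4 * s ^ 2)) x :=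
    ((hasDerivAt_id x).neg.sub ((hasDerivAt_pow 2 x).div_const (4 * s ^ 2))).congr_deriv (by ring)
  refine hexponent.exp.neg.congr_deriv ?_
  field_simp
  ring

theorem integrableOn_Ioi_exp_neg_sub_sq_div (s : ℝ) :
    IntegrableOn (fun x ↦ exp (-x - x ^ 2 / (4 * s ^ 2))) (Ioi 0) := by
  refine (exp_neg_integrableOn_Ioi 0 one_pos).mono' (by fun_prop) (ae_of_all _ fun x ↦ ?_)
  rw [norm_of_nonneg (exp_pos _).le, exp_le_exp]
  have : 0 ≤ x ^ 2 / (4 * s ^ 2) := by positivity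
  linarith

theorem tendsto_neg_exp_neg_sub_sq_div_atTop (s : ℝ) :
    Tendsto (fun x ↦ -exp (-x - x ^ 2 / (4 * s ^ 2))) atTop (𝓝 0) := by
  simpa using (tendsto_exp_neg_sub_sq_div_atTop s).neg

theorem integrableOn_Ioi_one_add_div_mul_exp_neg_sub_sq_div (hs : s ≠ 0) :
    IntegrableOn (fun x ↦ (1 + x / (2 * s ^ 2)) * exp (-x - x ^ 2 / (4 * s ^ 2))) (Ioi 0) :=
  integrableOn_Ioi_deriv_of_nonneg' (fun x _ ↦ hasDerivAt_neg_exp_neg_sub_sq_div hs x)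
    (fun _ hx ↦ by have := hx.out; positivity)
    (tendsto_neg_exp_neg_sub_sq_div_atTop s)

theorem integral_Ioi_one_add_div_mul_exp_neg_sub_sq_div (hs : s ≠ 0) :
    ∫ x in Ioi (0 : ℝ), (1 + x / (2 * s ^ 2)) * exp (-x - x ^ 2 / (4 * s ^ 2)) = 1 := by
  rw [integral_Ioi_of_hasDerivAt_of_nonneg' (fun x _ ↦ hasDerivAt_neg_exp_neg_sub_sq_div hs x)
    (fun _ hx ↦ by have := hx.out; positivity)
    (tendsto_neg_exp_neg_sub_sq_div_atTop s)]
  simp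

theorem mul_exp_neg_sub_sq_div_eq (hs : s ≠ 0) (x : ℝ) :
    x * exp (-x - x ^ 2 / (4 * s ^ 2)) =
      2 * s ^ 2 * ((1 + x / (2 * s ^ 2)) * exp (-x - x ^ 2 / (4 * s ^ 2))) -
        2 * s ^ 2 * exp (-x - x ^ 2 / (4 * s ^ 2)) := by
  field_simp
  ring

theorem integrableOn_Ioi_mul_exp_neg_sub_sq_div (hs : s ≠ 0) :
    IntegrableOn (fun x ↦ x * exp (-x - x ^ 2 / (4 * s ^ 2))) (Ioi 0) := by
  simp_rw [mul_exp_neg_sub_sq_div_eq hs]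
  exact ((integrableOn_Ioi_one_add_div_mul_exp_neg_sub_sq_div hs).const_mul _).sub
    ((integrableOn_Ioi_exp_neg_sub_sq_div s).const_mul _)

theorem integral_Ioi_mul_exp_neg_sub_sq_div (hs : s ≠ 0) :
    ∫ x in Ioi (0 : ℝ), x * exp (-x - x ^ 2 / (4 * s ^ 2)) =
      2 * s ^ 2 * (1 - ∫ x in Ioi (0 : ℝ), exp (-x - x ^ 2 / (4 * s ^ 2))) := by
  simp_rw [mul_exp_neg_sub_sq_div_eq hs]
  rw [integral_sub ((integrableOn_Ioi_one_add_div_mul_exp_neg_sub_sq_div hs).const_mul _)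
      ((integrableOn_Ioi_exp_neg_sub_sq_div s).const_mul _),
    integral_const_mul, integral_const_mul, integral_Ioi_one_add_div_mul_exp_neg_sub_sq_div hs]
  ring

end LaplaceGauss

theorem integral_Ioi_mul_intervalIntegral_self {f : ℝ → ℝ} {a : ℝ} (hf : Continuous f)
    (hfi : IntegrableOn f (Ioi a)) :
    ∫ x in Ioi a, f x * ∫ t in a..x, f t = (∫ x in Ioi a, f x) ^ 2 / 2 := by
  set F : ℝ → ℝ := fun x ↦ ∫ t in a..x, f t
  have hF : ∀ x, HasDerivAt F (f x) x := fun x ↦ (hf.integral_hasStrictDerivAt a x).hasDerivAt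
  have hF_bound : ∀ x ∈ Ioi a, ‖F x‖ ≤ ∫ t in Ioi a, ‖f t‖ := fun x hx ↦ calc
    ‖F x‖ ≤ ∫ t in a..x, ‖f t‖ := intervalIntegral.norm_integral_le_integral_norm hx.out.le
    _ = ∫ t in Ioc a x, ‖f t‖ := intervalIntegral.integral_of_le hx.out.le
    _ ≤ ∫ t in Ioi a, ‖f t‖ :=
      setIntegral_mono_set hfi.norm (ae_of_all _ fun _ ↦ norm_nonneg _)
        Ioc_subset_Ioi_self.eventuallyLE
  have hint : IntegrableOn (fun x ↦ f x * F x) (Ioi a) :=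
    hfi.mul_bdd (by fun_prop) ((ae_restrict_iff' measurableSet_Ioi).mpr (ae_of_all _ hF_bound))
  have hlim : Tendsto (fun x ↦ F x ^ 2 / 2) atTop (𝓝 ((∫ x in Ioi a, f x) ^ 2 / 2)) :=
    ((intervalIntegral_tendsto_integral_Ioi a hfi tendsto_id).pow 2).div_const 2
  rw [integral_Ioi_of_hasDerivAt_of_tendsto' (fun x _ ↦ ?_) hint hlim]
  · simp [F]
  · exact (((hF x).pow 2).div_const 2).congr_deriv (by push_cast; ring)

theorem selfblocking_half_cone_term (γ : ℝ) (hγ : 0 < γ) :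
    ∫ x₂ in Set.Ioi (0 : ℝ),
        ∫ x₁ in (0 : ℝ)..x₂,
          x₁ * x₂ * Real.exp (-x₁ - x₂ - (x₁ ^ 2 + x₂ ^ 2) / (8 * γ ^ 2))
      = 8 * γ ^ 4 * (1 - 2 * Real.sqrt 2 * γ * W (Real.sqrt 2 * γ)) ^ 2 := by
  set s := √2 * γ with hs_def
  have hs : 0 < s := by positivity
  have hsq : s ^ 2 = 2 * γ ^ 2 := by rw [hs_def, mul_pow, sq_sqrt zero_le_two]
  set f : ℝ → ℝ := fun x ↦ x * exp (-x - x ^ 2 / (4 * s ^ 2)) with hf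
  have hinner (x₁ x₂ : ℝ) :
      x₁ * x₂ * exp (-x₁ - x₂ - (x₁ ^ 2 + x₂ ^ 2) / (8 * γ ^ 2)) = f x₂ * f x₁ := by
    rw [show -x₁ - x₂ - (x₁ ^ 2 + x₂ ^ 2) / (8 * γ ^ 2) =
      (-x₂ - x₂ ^ 2 / (4 * s ^ 2)) + (-x₁ - x₁ ^ 2 / (4 * s ^ 2)) by rw [hsq]; ring, exp_add, hf]
    ring
  simp_rw [hinner, intervalIntegral.integral_const_mul]
  rw [integral_Ioi_mul_intervalIntegral_self (by fun_prop)
      (integrableOn_Ioi_mul_exp_neg_sub_sq_div hs.ne'),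
    integral_Ioi_mul_exp_neg_sub_sq_div hs.ne', integral_Ioi_exp_neg_sub_sq_div hs, hsq]
  ring
end
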